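/- arXiv:1607.03173 — 5 statements merged into one kernel-verified Lean document; each statement's English description precedes it below -/
import Mathlib

section
/- For any real number θ < 1 and any positive integer j, the sum ∑_{k=j+1}^∞ (j/(k(k-1)))·(k/j)^θ is bounded below by (1+1/j)^{θ-1}·1/(1-θ) and bounded above by (1+1/j)·1/(1-θ). -/
/-!
With `p = (k - 1) / j` and `q = k / j`, the `k`-th term of the series is `q ^ (θ - 1) (q - p) / p`.
By the mean value theorem `p ^ (θ - 1) - q ^ (θ - 1) = (1 - θ) (q - p) c ^ (θ - 2)` for some
`c ∈ (p, q)`, and since `1 < q / p ≤ 1 + 1 / j` the term lies between `(1 + 1 / j) ^ (θ - 1)` and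
`1 + 1 / j` times `(p ^ (θ - 1) - q ^ (θ - 1)) / (1 - θ)`. These differences telescope to
`1 ^ (θ - 1) = 1`, because `q ^ (θ - 1) → 0` as `k → ∞`.
-/

open Filter Finset Topology

theorem hasSum_sub_succ_of_antitone {g : ℕ → ℝ} (hg : Antitone g)
    (hlim : Tendsto g atTop (𝓝 0)) : HasSum (fun n ↦ g n - g (n + 1)) (g 0) := by
  rw [hasSum_iff_tendsto_nat_of_nonneg fun n ↦ sub_nonneg.2 (hg n.le_succ)]
  simp_rw [sum_range_sub']
  simpa using tendsto_const_nhds.sub hlim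

theorem hasSum_ite_le_iff {G : Type*} [AddCommGroup G] [TopologicalSpace G]
    [IsTopologicalAddGroup G] {F : ℕ → G} {s : G} (m : ℕ) :
    HasSum (fun k ↦ if m ≤ k then F k else 0) s ↔ HasSum (fun n ↦ F (n + m)) s := by
  rw [← hasSum_nat_add_iff' m, sum_eq_zero fun k hk ↦ if_neg (by simpa using hk), sub_zero]
  simp

theorem exists_hasSum_mem_Icc_of_le_mul {ι : Type*} {f d : ι → ℝ} {s a b : ℝ}
    (hd : HasSum d s) (hlo : ∀ i, a * d i ≤ f i) (hhi : ∀ i, f i ≤ b * d i) :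
    ∃ t, HasSum f t ∧ t ∈ Set.Icc (a * s) (b * s) := by
  have hgap : Summable fun i ↦ f i - a * d i :=
    .of_nonneg_of_le (fun i ↦ sub_nonneg.2 (hlo i)) (fun i ↦ by linarith [hhi i])
      (hd.summable.mul_left (b - a))
  have hf : Summable f := by simpa using hgap.add (hd.summable.mul_left a)
  exact ⟨_, hf.hasSum, hasSum_le hlo (hd.mul_left a) hf.hasSum,
    hasSum_le hhi hf.hasSum (hd.mul_left b)⟩

section
variable {θ p q : ℝ}

theorem exists_rpow_sub_rpow_eq (hp : 0 < p) (hpq : p < q) :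
    ∃ c ∈ Set.Ioo p q, p ^ (θ - 1) - q ^ (θ - 1) = (1 - θ) * (q - p) * c ^ (θ - 2) := by
  have hderiv : ∀ x ∈ Set.Icc p q, HasDerivAt (· ^ (θ - 1)) ((θ - 1) * x ^ (θ - 2)) x :=
    fun x hx ↦ by
      rw [show θ - 2 = θ - 1 - 1 by ring]
      exact Real.hasDerivAt_rpow_const (Or.inl (hp.trans_le hx.1).ne')
  obtain ⟨c, hc, hslope⟩ := exists_hasDerivAt_eq_slope (· ^ (θ - 1)) _ hpq
    (fun x hx ↦ (hderiv x hx).continuousAt.continuousWithinAt)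
    (fun x hx ↦ hderiv x (Set.Ioo_subset_Icc_self hx))
  refine ⟨c, hc, ?_⟩
  rw [eq_div_iff (sub_pos.2 hpq).ne'] at hslope
  linear_combination hslope

theorem rpow_mul_rpow_sub_rpow_le_one_sub_mul (hθ : θ ≤ 1) {r : ℝ} (hp : 0 < p) (hpq : p < q)
    (hqr : q ≤ r * p) :
    r ^ (θ - 1) * (p ^ (θ - 1) - q ^ (θ - 1)) ≤ (1 - θ) * (q ^ (θ - 1) * (q - p) / p) := by
  obtain ⟨c, hc, hdiff⟩ := exists_rpow_sub_rpow_eq (θ := θ) hp hpq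
  have hq : 0 < q := hp.trans hpq
  have hratio : r ^ (θ - 1) ≤ (q / p) ^ (θ - 1) :=
    Real.rpow_le_rpow_of_nonpos (by positivity) ((div_le_iff₀ hp).2 hqr) (by linarith)
  have hc_le : c ^ (θ - 2) ≤ p ^ (θ - 2) :=
    Real.rpow_le_rpow_of_nonpos hp hc.1.le (by linarith)
  have hsplit : q ^ (θ - 1) / p = (q / p) ^ (θ - 1) * p ^ (θ - 2) := by
    rw [Real.div_rpow hq.le hp.le, show θ - 2 = θ - 1 - 1 by ring,
      Real.rpow_sub_one hp.ne' (θ - 1)]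
    field_simp
  calc r ^ (θ - 1) * (p ^ (θ - 1) - q ^ (θ - 1))
      = r ^ (θ - 1) * ((1 - θ) * (q - p) * c ^ (θ - 2)) := by rw [hdiff]
    _ ≤ (q / p) ^ (θ - 1) * ((1 - θ) * (q - p) * p ^ (θ - 2)) := by
      gcongr
      exact mul_nonneg (mul_nonneg (by linarith) (by linarith))
        (Real.rpow_nonneg (hp.trans hc.1).le _)
    _ = (1 - θ) * (q ^ (θ - 1) * (q - p) / p) := by rw [mul_div_right_comm, hsplit]; ring

theorem one_sub_mul_le_mul_rpow_sub_rpow (hθ : θ ≤ 1) {r : ℝ} (hp : 0 < p) (hpq : p < q)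
    (hqr : q ≤ r * p) :
    (1 - θ) * (q ^ (θ - 1) * (q - p) / p) ≤ r * (p ^ (θ - 1) - q ^ (θ - 1)) := by
  obtain ⟨c, hc, hdiff⟩ := exists_rpow_sub_rpow_eq (θ := θ) hp hpq
  have hq : 0 < q := hp.trans hpq
  have hqpr : q / p ≤ r := (div_le_iff₀ hp).2 hqr
  have hq_le : q ^ (θ - 2) ≤ c ^ (θ - 2) :=
    Real.rpow_le_rpow_of_nonpos (hp.trans hc.1) hc.2.le (by linarith)
  have hsplit : q ^ (θ - 1) = q ^ (θ - 2) * q := by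
    rw [show θ - 2 = θ - 1 - 1 by ring, Real.rpow_sub_one hq.ne' (θ - 1)]
    field_simp
  calc (1 - θ) * (q ^ (θ - 1) * (q - p) / p)
      = q / p * ((1 - θ) * (q - p) * q ^ (θ - 2)) := by rw [hsplit]; ring
    _ ≤ r * ((1 - θ) * (q - p) * c ^ (θ - 2)) := by
      gcongr
      exact (div_pos hq hp).le.trans hqpr
    _ = r * (p ^ (θ - 1) - q ^ (θ - 1)) := by rw [hdiff]

end

section
variable {θ : ℝ}

theorem hasSum_rpow_div_sub_rpow_div (hθ : θ < 1) {j : ℕ} (hj : 0 < j) :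
    HasSum (fun n : ℕ ↦ ((((n + (j + 1) : ℕ) : ℝ) - 1) / j) ^ (θ - 1)
      - (((n + (j + 1) : ℕ) : ℝ) / j) ^ (θ - 1)) 1 := by
  have hj0 : (0 : ℝ) < j := by exact_mod_cast hj
  set g : ℕ → ℝ := fun n ↦ (((n + j : ℕ) : ℝ) / j) ^ (θ - 1)
  have hanti : Antitone g := fun a b hab ↦
    Real.rpow_le_rpow_of_nonpos (by positivity) (by gcongr) (by linarith)
  have hlim : Tendsto g atTop (𝓝 0) := by
    have hlin : Tendsto (fun n : ℕ ↦ ((n + j : ℕ) : ℝ) / j) atTop atTop :=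
      tendsto_natCast_atTop_atTop.comp (tendsto_add_atTop_nat j) |>.atTop_div_const hj0
    have := (tendsto_rpow_neg_atTop (by linarith : 0 < 1 - θ)).comp hlin
    rwa [neg_sub] at this
  have hshift (n : ℕ) : ((((n + (j + 1) : ℕ) : ℝ) - 1) / j) ^ (θ - 1)
      - (((n + (j + 1) : ℕ) : ℝ) / j) ^ (θ - 1) = g n - g (n + 1) := by
    have hcast : ((n + (j + 1) : ℕ) : ℝ) - 1 = ((n + j : ℕ) : ℝ) := by push_cast; ring
    rw [hcast, show n + (j + 1) = n + 1 + j by omega]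
  simp only [hshift]
  simpa [g, hj0.ne'] using hasSum_sub_succ_of_antitone hanti hlim

variable {j k : ℝ}

theorem div_mul_sub_one_mul_div_rpow_eq (hj : 0 < j) (hk : 1 < k) :
    j / (k * (k - 1)) * (k / j) ^ θ
      = (k / j) ^ (θ - 1) * (k / j - (k - 1) / j) / ((k - 1) / j) := by
  have hk1 : 0 < k - 1 := by linarith
  rw [Real.rpow_sub_one (by positivity)]
  field_simp
  ring

theorem renyi_term_bounds (hθ : θ < 1) (hj : 0 < j) (hjk : j + 1 ≤ k) :
    (1 + 1 / j) ^ (θ - 1) * (1 / (1 - θ)) * (((k - 1) / j) ^ (θ - 1) - (k / j) ^ (θ - 1))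
        ≤ j / (k * (k - 1)) * (k / j) ^ θ ∧
      j / (k * (k - 1)) * (k / j) ^ θ
        ≤ (1 + 1 / j) * (1 / (1 - θ)) * (((k - 1) / j) ^ (θ - 1) - (k / j) ^ (θ - 1)) := by
  have hp : 0 < (k - 1) / j := div_pos (by linarith) hj
  have hpq : (k - 1) / j < k / j := by gcongr; linarith
  have hqr : k / j ≤ (1 + 1 / j) * ((k - 1) / j) := by
    rw [div_le_iff₀ hj]; field_simp; linarith
  have hlo := rpow_mul_rpow_sub_rpow_le_one_sub_mul hθ.le hp hpq hqr
  have hhi := one_sub_mul_le_mul_rpow_sub_rpow hθ.le hp hpq hqr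
  have hθ' : 0 < 1 - θ := by linarith
  rw [div_mul_sub_one_mul_div_rpow_eq hj (by linarith)]
  constructor
  · rw [mul_right_comm, mul_one_div, div_le_iff₀ hθ']
    linarith
  · rw [mul_right_comm, mul_one_div, le_div_iff₀ hθ']
    linarith

end

/-- For any real `θ < 1` and integer `j ≥ 1`, the series
`∑_{k=j+1}^∞ (j/(k(k-1)))·(k/j)^θ` is bounded below by `(1+1/j)^(θ-1)·1/(1-θ)`
and above by `(1+1/j)·1/(1-θ)`. -/
theorem renyi_series_bounds (θ : ℝ) (hθ : θ < 1) (j : ℕ) (hj : 1 ≤ j) :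
    (1 + 1 / (j : ℝ)) ^ (θ - 1) * (1 / (1 - θ)) ≤
      (∑' k : ℕ, if j + 1 ≤ k then
        (j : ℝ) / ((k : ℝ) * ((k : ℝ) - 1)) * ((k : ℝ) / (j : ℝ)) ^ θ else 0) ∧
    (∑' k : ℕ, if j + 1 ≤ k then
        (j : ℝ) / ((k : ℝ) * ((k : ℝ) - 1)) * ((k : ℝ) / (j : ℝ)) ^ θ else 0) ≤
      (1 + 1 / (j : ℝ)) * (1 / (1 - θ)) := by
  have hj0 : (0 : ℝ) < j := by exact_mod_cast hj
  have hterm (n : ℕ) := renyi_term_bounds hθ hj0 (k := ((n + (j + 1) : ℕ) : ℝ))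
    (by push_cast; linarith [(n.cast_nonneg : (0 : ℝ) ≤ n)])
  obtain ⟨t, ht, hlo, hhi⟩ := exists_hasSum_mem_Icc_of_le_mul
    (hasSum_rpow_div_sub_rpow_div hθ hj) (fun n ↦ (hterm n).1) (fun n ↦ (hterm n).2)
  rw [((hasSum_ite_le_iff (j + 1)
    (F := fun k : ℕ ↦ (j : ℝ) / ((k : ℝ) * ((k : ℝ) - 1)) * ((k : ℝ) / j) ^ θ)).2 ht).tsum_eq]
  rw [mul_one] at hlo hhi
  exact ⟨hlo, hhi⟩
end

section
/- For every real x, sup over θ < 1 of (θx + θ + log(1-θ)) equals x - log(x+1) if x > -1, and equals +∞ if x ≤ -1. -/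
open Real

/-!
With `a = x + 1` the objective is `θ a + log (1 - θ)`. For `a > 0`, `log u ≤ u - 1` at
`u = (1 - θ) a` bounds it by `a - 1 - log a`, with equality at `θ = 1 - 1/a`. For `a ≤ 0`,
letting `θ → -∞` makes `θ a ≥ 0` while `log (1 - θ) → ∞`.
-/

lemma mul_add_log_one_sub_le {a θ : ℝ} (ha : 0 < a) (hθ : θ < 1) :
    θ * a + log (1 - θ) ≤ a - 1 - log a := by
  have hθ' : 0 < 1 - θ := sub_pos.2 hθ
  have key := log_le_sub_one_of_pos (mul_pos hθ' ha)
  rw [log_mul hθ'.ne' ha.ne'] at key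
  linarith

lemma mul_add_log_one_sub_inv_eq {a : ℝ} (ha : 0 < a) :
    (1 - a⁻¹) * a + log (1 - (1 - a⁻¹)) = a - 1 - log a := by
  rw [sub_sub_cancel, log_inv, sub_mul, inv_mul_cancel₀ ha.ne', one_mul]
  ring

lemma exists_lt_mul_add_log_one_sub {a : ℝ} (ha : a ≤ 0) (r : ℝ) :
    ∃ θ < 1, r < θ * a + log (1 - θ) := by
  have hexp : 1 < exp (|r| + 1) := one_lt_exp_iff.2 (by positivity)
  refine ⟨1 - exp (|r| + 1), by linarith, ?_⟩
  rw [sub_sub_cancel, log_exp]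
  have : 0 ≤ (1 - exp (|r| + 1)) * a := mul_nonneg_of_nonpos_of_nonpos (by linarith) ha
  linarith [le_abs_self r]

/-- Legendre transform of `Λ_C(θ) = -θ - log(1-θ)` (for `θ < 1`):
`sup_{θ<1} (θx + θ + log(1-θ))` equals `x - log(x+1)` if `x > -1` and `+∞` if `x ≤ -1`. -/
theorem legendre_transform_C (x : ℝ) :
    (⨆ θ : {t : ℝ // t < 1}, ((θ.1 * x + θ.1 + Real.log (1 - θ.1) : ℝ) : EReal)) =
      if -1 < x then ((x - Real.log (x + 1) : ℝ) : EReal) else ⊤ := by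
  have hobj (θ : ℝ) : θ * x + θ + log (1 - θ) = θ * (x + 1) + log (1 - θ) := by ring
  simp only [hobj]
  split_ifs with hx
  · have ha : 0 < x + 1 := by linarith
    have hval : x - log (x + 1) = x + 1 - 1 - log (x + 1) := by ring
    rw [hval]
    refine le_antisymm (iSup_le fun θ => ?_) ?_
    · exact EReal.coe_le_coe_iff.2 (mul_add_log_one_sub_le ha θ.2)
    · have hθ : 1 - (x + 1)⁻¹ < 1 := sub_lt_self 1 (inv_pos.2 ha)
      exact le_iSup_of_le ⟨_, hθ⟩ (EReal.coe_le_coe_iff.2 (mul_add_log_one_sub_inv_eq ha).ge)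
  · rw [EReal.eq_top_iff_forall_lt]
    intro r
    obtain ⟨θ, hθ, hr⟩ := exists_lt_mul_add_log_one_sub (a := x + 1) (by linarith) r
    exact lt_iSup_iff.2 ⟨⟨θ, hθ⟩, EReal.coe_lt_coe_iff.2 hr⟩
end

section
/- Define Λ_A(θ) = -θ - log 2 for θ ≤ -1, Λ_A(θ) = -θ - log(1-θ) for -1 < θ < 1, and Λ_A(θ) = +∞ for θ ≥ 1. Then its Legendre transform sup_{θ∈ℝ}(θx - Λ_A(θ)) equals x - log(x+1) if x > -1/2, equals -x - 1 + log 2 if -1 ≤ x ≤ -1/2, and equals +∞ if x < -1. -/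
/-- The logarithmic moment generating function for A-processes. -/
noncomputable def ΛA (θ : ℝ) : EReal :=
  if θ ≤ -1 then ((-θ - Real.log 2 : ℝ) : EReal)
  else if θ < 1 then ((-θ - Real.log (1 - θ) : ℝ) : EReal)
  else ⊤

/-!
With `y = x + 1`, on `[-1, 1)` the objective is `θ y + log (1 - θ)`, concave in `θ`, and it
is bounded above by its tangent-line bound `log t ≤ c t - 1 - log c` at `t = 1 - θ`. For
`y > 1/2` the choice `c = y` is attained at the interior critical point `θ = 1 - 1/y`; for
`0 ≤ y ≤ 1/2` the choice `c = 1/2` shows the maximum sits at the kink `θ = -1`. On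
`θ ≤ -1` the objective is the affine `θ y + log 2`, which is maximal at `θ = -1` when
`y ≥ 0` and unbounded when `y < 0`.
-/

open Real

theorem Real.log_le_mul_sub_one_sub_log {c t : ℝ} (hc : 0 < c) (ht : 0 < t) :
    log t ≤ c * t - 1 - log c := by
  have := log_le_sub_one_of_pos (mul_pos hc ht)
  rw [log_mul hc.ne' ht.ne'] at this
  linarith

section ΛA

variable {θ : ℝ}

theorem ΛA_of_le_neg_one (hθ : θ ≤ -1) : ΛA θ = ((-θ - log 2 : ℝ) : EReal) :=
  if_pos hθ

theorem ΛA_of_neg_one_le_of_lt_one (h₁ : -1 ≤ θ) (h₂ : θ < 1) :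
    ΛA θ = ((-θ - log (1 - θ) : ℝ) : EReal) := by
  rcases h₁.eq_or_lt with rfl | h₁
  · norm_num [ΛA]
  · simp [ΛA, not_le.2 h₁, h₂]

theorem ΛA_of_one_le (hθ : 1 ≤ θ) : ΛA θ = ⊤ := by
  simp [ΛA, not_le.2 (by linarith : -1 < θ), not_lt.2 hθ]

theorem coe_mul_sub_ΛA_of_le_neg_one (x : ℝ) (hθ : θ ≤ -1) :
    ((θ * x : ℝ) : EReal) - ΛA θ = ((θ * (x + 1) + log 2 : ℝ) : EReal) := by
  rw [ΛA_of_le_neg_one hθ, ← EReal.coe_sub]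
  ring_nf

theorem coe_mul_sub_ΛA_of_neg_one_le_of_lt_one (x : ℝ) (h₁ : -1 ≤ θ) (h₂ : θ < 1) :
    ((θ * x : ℝ) : EReal) - ΛA θ = ((θ * (x + 1) + log (1 - θ) : ℝ) : EReal) := by
  rw [ΛA_of_neg_one_le_of_lt_one h₁ h₂, ← EReal.coe_sub]
  ring_nf

end ΛA

theorem iSup_coe_mul_sub_ΛA_le {x a : ℝ} (hx : -1 ≤ x)
    (h : ∀ θ, -1 ≤ θ → θ < 1 → θ * (x + 1) + log (1 - θ) ≤ a) :
    ⨆ θ : ℝ, ((θ * x : ℝ) : EReal) - ΛA θ ≤ a := by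
  refine iSup_le fun θ => ?_
  rcases lt_or_ge θ 1 with h₂ | h₂
  · rcases le_or_gt θ (-1) with h₁ | h₁
    · rw [coe_mul_sub_ΛA_of_le_neg_one x h₁, EReal.coe_le_coe_iff]
      have hkink := h (-1) le_rfl (by norm_num)
      have := mul_le_mul_of_nonneg_right h₁ (by linarith : 0 ≤ x + 1)
      norm_num at hkink
      linarith
    · rw [coe_mul_sub_ΛA_of_neg_one_le_of_lt_one x h₁.le h₂, EReal.coe_le_coe_iff]
      exact h θ h₁.le h₂
  · rw [ΛA_of_one_le h₂, EReal.sub_top]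
    exact bot_le

theorem iSup_coe_mul_sub_ΛA_of_lt_neg_one {x : ℝ} (hx : x < -1) :
    ⨆ θ : ℝ, ((θ * x : ℝ) : EReal) - ΛA θ = ⊤ := by
  refine EReal.eq_top_iff_forall_lt _ |>.2 fun r => ?_
  set θ := min (-1) ((r - log 2) / (x + 1) - 1)
  have hθ : θ ≤ -1 := min_le_left _ _
  have hθr : r - log 2 < θ * (x + 1) :=
    calc r - log 2 < (r - log 2) / (x + 1) * (x + 1) - (x + 1) := by
          rw [div_mul_cancel₀ _ (by linarith : x + 1 ≠ 0)]; linarith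
      _ = ((r - log 2) / (x + 1) - 1) * (x + 1) := by ring
      _ ≤ θ * (x + 1) := mul_le_mul_of_nonpos_right (min_le_right _ _) (by linarith)
  refine lt_iSup_iff.2 ⟨θ, ?_⟩
  rw [coe_mul_sub_ΛA_of_le_neg_one x hθ, EReal.coe_lt_coe_iff]
  linarith

/-- The Legendre transform of `Λ_A` equals `x - log(x+1)` for `x > -1/2`,
`-x - 1 + log 2` for `-1 ≤ x ≤ -1/2`, and `+∞` for `x < -1`. -/
theorem legendre_transform_A (x : ℝ) :
    (⨆ θ : ℝ, ((θ * x : ℝ) : EReal) - ΛA θ) =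
      if -1/2 < x then ((x - Real.log (x + 1) : ℝ) : EReal)
      else if -1 ≤ x then ((-x - 1 + Real.log 2 : ℝ) : EReal)
      else ⊤ := by
  split_ifs with hx₁ hx₂
  · have hy : 0 < x + 1 := by linarith
    have hθ₀ : -1 ≤ 1 - (x + 1)⁻¹ := by
      have : (x + 1)⁻¹ ≤ 2 := inv_le_of_inv_le₀ (by norm_num) (by linarith)
      linarith
    have hθ₀' : 1 - (x + 1)⁻¹ < 1 := by simpa using inv_pos.2 hy
    refine le_antisymm (iSup_coe_mul_sub_ΛA_le (by linarith) fun θ _ hθ => ?_)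
      (le_iSup_of_le (1 - (x + 1)⁻¹) ?_)
    · have := log_le_mul_sub_one_sub_log hy (by linarith : 0 < 1 - θ)
      linarith
    · rw [coe_mul_sub_ΛA_of_neg_one_le_of_lt_one x hθ₀ hθ₀', EReal.coe_le_coe_iff, sub_sub_cancel,
        log_inv, sub_mul, inv_mul_cancel₀ hy.ne']
      linarith
  · refine le_antisymm (iSup_coe_mul_sub_ΛA_le hx₂ fun θ hθ₁ hθ₂ => ?_)
      (le_iSup_of_le (-1) ?_)
    · have := log_le_mul_sub_one_sub_log (by norm_num : (0 : ℝ) < 1 / 2) (by linarith : 0 < 1 - θ)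
      rw [one_div, log_inv] at this
      nlinarith
    · rw [coe_mul_sub_ΛA_of_le_neg_one x le_rfl, EReal.coe_le_coe_iff]
      linarith
  · exact iSup_coe_mul_sub_ΛA_of_lt_neg_one (by linarith)
end

section
/- For each integer a ≥ 2, define I_{A,a}(x) = x - log(x+1) for x > -1 + 1/a, I_{A,a}(x) = (1-a)(x+1) + log a for -1 ≤ x ≤ -1 + 1/a, and +∞ for x < -1. Then for every real x, I_{A,a}(x) → I_C(x) as a → ∞, where I_C(x) = x - log(x+1) for x > -1 and +∞ for x ≤ -1 (convergence in the extended reals [0,∞]). -/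
open Filter

/-- The large deviation rate function for A-processes with initial value `a`. -/
noncomputable def IAa (a : ℕ) (x : ℝ) : EReal :=
  if -1 + 1 / (a : ℝ) < x then ((x - Real.log (x + 1) : ℝ) : EReal)
  else if -1 ≤ x then (((1 - (a : ℝ)) * (x + 1) + Real.log a : ℝ) : EReal)
  else ⊤

/-- The large deviation rate function for C-processes. -/
noncomputable def IC (x : ℝ) : EReal :=
  if -1 < x then ((x - Real.log (x + 1) : ℝ) : EReal) else ⊤

/-- Pointwise, `I_{A,a} → I_C` as the initial value `a → ∞`. -/
theorem IAa_tendsto_IC (x : ℝ) :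
    Tendsto (fun a : ℕ => IAa a x) atTop (nhds (IC x)) := by
  rcases lt_trichotomy x (-1) with h | h | h
  · have hIC : IC x = ⊤ := by simp [IC, not_lt.mpr h.le, h]
    rw [hIC]
    apply tendsto_const_nhds.congr' ?_
    filter_upwards [eventually_ge_atTop 1] with a ha
    have h1 : ¬ (-1 + 1 / (a : ℝ) < x) := by
      have : (0 : ℝ) ≤ 1 / (a : ℝ) := by positivity
      push_neg; linarith
    unfold IAa; rw [if_neg h1, if_neg (not_le.mpr h)]
  · subst h
    have hIC : IC (-1) = ⊤ := by simp [IC]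
    rw [hIC, EReal.tendsto_nhds_top_iff_real]
    intro y
    have hlog : Tendsto (fun a : ℕ => Real.log a) atTop atTop :=
      Real.tendsto_log_atTop.comp tendsto_natCast_atTop_atTop
    filter_upwards [hlog.eventually_gt_atTop y, eventually_ge_atTop 1] with a hy ha
    have h1 : ¬ (-1 + 1 / (a : ℝ) < (-1 : ℝ)) := by
      have : (0 : ℝ) ≤ 1 / (a : ℝ) := by positivity
      push_neg; linarith
    have : IAa a (-1) = ((Real.log a : ℝ) : EReal) := by
      unfold IAa; rw [if_neg h1, if_pos le_rfl]; norm_num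
    rw [this]
    exact_mod_cast hy
  · have hIC : IC x = ((x - Real.log (x + 1) : ℝ) : EReal) := by simp [IC, h]
    rw [hIC]
    apply tendsto_const_nhds.congr' ?_
    have hx : (0 : ℝ) < x + 1 := by linarith
    have : Tendsto (fun a : ℕ => 1 / (a : ℝ)) atTop (nhds 0) :=
      tendsto_one_div_atTop_nhds_zero_nat
    filter_upwards [this.eventually_lt_const hx] with a ha
    have h1 : -1 + 1 / (a : ℝ) < x := by linarith
    unfold IAa; rw [if_pos h1]
end

section
/- Suppose (C_n) is a Markov chain with C_0 = 1 and transition probabilities p_{ij} = i/(j(j-1)) for j ≥ i+1, 0 otherwise. Then for any θ < 1, (1/n)·log E(C_n^θ) → log(1/(1-θ)) as n → ∞. -/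
open Filter
open scoped ENNReal

/-- One-step transition probabilities of the C-process:
`p i j = i/(j(j-1))` for `j ≥ i + 1`, and `0` otherwise. -/
noncomputable def pC (i j : ℕ) : ℝ≥0∞ :=
  if i + 1 ≤ j then (i : ℝ≥0∞) / ((j : ℝ≥0∞) * ((j : ℝ≥0∞) - 1)) else 0

/-- Marginal distribution of the C-process started at `C_0 = 1`. -/
noncomputable def μC : ℕ → ℕ → ℝ≥0∞
  | 0 => fun j => if j = 1 then 1 else 0
  | n + 1 => fun j => ∑' i : ℕ, μC n i * pC i j

lemma rpow_diff_bounds {p : ℝ} (hp : p < 0) {x : ℝ} (hx : 1 ≤ x) :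
    (-p) * (x+1) ^ (p-1) ≤ x ^ p - (x+1) ^ p ∧ x ^ p - (x+1) ^ p ≤ (-p) * x ^ (p-1) := by
  have hx0 : 0 < x := lt_of_lt_of_le one_pos hx
  have hlt : x < x + 1 := lt_add_one x
  obtain ⟨c, hc, hceq⟩ := exists_hasDerivAt_eq_slope (fun y => y ^ p)
      (fun y => p * y ^ (p-1)) hlt
      (fun y hy => by
        have : (0:ℝ) < y := lt_of_lt_of_le hx0 hy.1
        exact ((Real.hasDerivAt_rpow_const (Or.inl this.ne')).continuousAt).continuousWithinAt)
      (fun y hy => Real.hasDerivAt_rpow_const (Or.inl (lt_of_lt_of_le hx0 hy.1.le).ne'))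
  have hc0 : 0 < c := lt_trans hx0 hc.1
  have hceq' : x ^ p - (x+1) ^ p = (-p) * c ^ (p-1) := by
    have : p * c ^ (p-1) = ((x+1) ^ p - x ^ p) / (x + 1 - x) := hceq
    have h1 : x + 1 - x = 1 := by ring
    rw [h1, div_one] at this
    linarith
  have hle1 : c ^ (p-1) ≤ x ^ (p-1) :=
    Real.rpow_le_rpow_of_nonpos hx0 hc.1.le (by linarith)
  have hle2 : (x+1) ^ (p-1) ≤ c ^ (p-1) :=
    Real.rpow_le_rpow_of_nonpos hc0 hc.2.le (by linarith)
  have hnp : 0 < -p := by linarith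
  constructor
  · rw [hceq']; exact mul_le_mul_of_nonneg_left hle2 hnp.le
  · rw [hceq']; exact mul_le_mul_of_nonneg_left hle1 hnp.le

lemma telescope_hasSum {p : ℝ} (hp : p < 0) {a : ℝ} (ha : 1 ≤ a) :
    HasSum (fun k : ℕ => (a + k) ^ p - (a + (k+1)) ^ p) (a ^ p) := by
  have ha0 : 0 < a := lt_of_lt_of_le one_pos ha
  set g : ℕ → ℝ := fun k => (a + k) ^ p with hg
  have hpos : ∀ k : ℕ, (0:ℝ) < a + k := fun k => by positivity
  have hnonneg : ∀ k : ℕ, 0 ≤ g k - g (k+1) := by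
    intro k
    have : g (k+1) ≤ g k := by
      apply Real.rpow_le_rpow_of_nonpos (hpos k) (by push_cast; linarith) hp.le
    linarith
  have hpartial : ∀ n : ℕ, ∑ k ∈ Finset.range n, (g k - g (k+1)) = g 0 - g n :=
    fun n => Finset.sum_range_sub' g n
  have hgnonneg : ∀ k, 0 ≤ g k := fun k => (Real.rpow_pos_of_pos (hpos k) p).le
  have hsummable : Summable (fun k => g k - g (k+1)) := by
    apply summable_of_sum_range_le (c := g 0) hnonneg
    intro n; rw [hpartial n]; linarith [hgnonneg n]
  have hgtend : Tendsto g atTop (nhds 0) := by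
    have h1 : Tendsto (fun k : ℕ => a + (k:ℝ)) atTop atTop :=
      tendsto_atTop_add_const_left _ a tendsto_natCast_atTop_atTop
    have h2 : Tendsto (fun y : ℝ => y ^ p) atTop (nhds 0) := by
      have := tendsto_rpow_neg_atTop (y := -p) (by linarith)
      simpa using this
    exact h2.comp h1
  have htend : Tendsto (fun n => ∑ k ∈ Finset.range n, (g k - g (k+1))) atTop
      (nhds (g 0 - 0)) := by
    simp only [hpartial]
    exact Tendsto.const_sub _ hgtend
  have := hsummable.hasSum
  have heq : (∑' k, (g k - g (k+1))) = g 0 - 0 :=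
    tendsto_nhds_unique this.tendsto_sum_nat htend
  have h0 : g 0 = a ^ p := by simp [hg]
  rw [heq, sub_zero, h0] at this
  have hcast : ∀ k : ℕ, a + ((k:ℝ)+1) = a + ((k+1:ℕ):ℝ) := by intro k; push_cast; ring
  simpa only [hcast] using this

lemma u_term_bounds {p : ℝ} (hp : p < 0) {a : ℝ} (ha : 1 ≤ a) {x : ℝ} (hx1 : a ≤ x) :
    (1+1/a) ^ (p-1) * (-p)⁻¹ * (x ^ p - (x+1) ^ p) ≤ (x+1) ^ p / x ∧
    (x+1) ^ p / x ≤ (1+1/a) * (-p)⁻¹ * (x ^ p - (x+1) ^ p) := by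
  have ha0 : 0 < a := lt_of_lt_of_le one_pos ha
  have hnp : (0:ℝ) < -p := by linarith
  have hx1' : 1 ≤ x := le_trans ha hx1
  have hx0 : 0 < x := lt_of_lt_of_le one_pos hx1'
  have hb : (0:ℝ) < 1 + 1/a := by positivity
  obtain ⟨hlo, hhi⟩ := rpow_diff_bounds hp hx1'
  have huk : (x+1) ^ p / x = (x+1) ^ (p-1) * ((x+1)/x) := by
    have h := Real.rpow_add_one (show x+1 ≠ 0 by linarith) (p-1)
    rw [sub_add_cancel] at h
    rw [h]; ring
  have hq1 : (0:ℝ) ≤ (x+1) ^ (p-1) := (Real.rpow_pos_of_pos (by linarith) _).le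
  have hq2 : (0:ℝ) ≤ x ^ (p-1) := (Real.rpow_pos_of_pos hx0 _).le
  have hdnn : 0 ≤ x ^ p - (x+1) ^ p := le_trans (by positivity) hlo
  have h1 : (x+1) ^ (p-1) ≤ (-p)⁻¹ * (x ^ p - (x+1) ^ p) := by
    rw [le_inv_mul_iff₀ hnp]; exact hlo
  have h1a : 1 ≤ x / a := (one_le_div ha0).mpr hx1
  have hxa : x + 1 ≤ (1 + 1/a) * x := by
    have : (1 + 1/a) * x = x + x / a := by field_simp
    linarith
  have h2 : (x+1)/x ≤ 1 + 1/a := by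
    rw [div_le_iff₀ hx0]; exact hxa
  have h2' : (1:ℝ) ≤ (x+1)/x := by
    rw [le_div_iff₀ hx0]; linarith
  have h3 : (-p)⁻¹ * (x ^ p - (x+1) ^ p) ≤ x ^ (p-1) := by
    rw [inv_mul_le_iff₀ hnp]; exact hhi
  have h4 : (1+1/a) ^ (p-1) * x ^ (p-1) ≤ (x+1) ^ (p-1) := by
    calc (1+1/a) ^ (p-1) * x ^ (p-1) = ((1+1/a) * x) ^ (p-1) := by
          rw [Real.mul_rpow hb.le hx0.le]
    _ ≤ (x+1) ^ (p-1) := Real.rpow_le_rpow_of_nonpos (by linarith) hxa (by linarith)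
  constructor
  · calc (1+1/a) ^ (p-1) * (-p)⁻¹ * (x ^ p - (x+1) ^ p)
        ≤ (1+1/a) ^ (p-1) * x ^ (p-1) := by
          rw [mul_assoc]
          exact mul_le_mul_of_nonneg_left h3 (Real.rpow_pos_of_pos hb _).le
    _ ≤ (x+1) ^ (p-1) := h4
    _ ≤ (x+1) ^ (p-1) * ((x+1)/x) := le_mul_of_one_le_right hq1 h2'
    _ = (x+1) ^ p / x := huk.symm
  · calc (x+1) ^ p / x = (x+1) ^ (p-1) * ((x+1)/x) := huk
    _ ≤ ((-p)⁻¹ * (x ^ p - (x+1) ^ p)) * (1+1/a) := by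
        apply mul_le_mul h1 h2 (by positivity) (by positivity)
    _ = (1+1/a) * (-p)⁻¹ * (x ^ p - (x+1) ^ p) := by ring

lemma u_bounds {p : ℝ} (hp : p < 0) {a : ℝ} (ha : 1 ≤ a) :
    Summable (fun k : ℕ => (a+1+k) ^ p / (a+k)) ∧
    (1+1/a) ^ (p-1) * (-p)⁻¹ * a ^ p ≤ ∑' k : ℕ, (a+1+k) ^ p / (a+k) ∧
    (∑' k : ℕ, (a+1+k) ^ p / (a+k)) ≤ (1+1/a) * (-p)⁻¹ * a ^ p := by
  have ha0 : 0 < a := lt_of_lt_of_le one_pos ha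
  have key : ∀ k : ℕ,
      ((1+1/a) ^ (p-1) * (-p)⁻¹ * ((a+k) ^ p - (a+(k+1)) ^ p) ≤ (a+1+k) ^ p / (a+k)) ∧
      ((a+1+k) ^ p / (a+k) ≤ (1+1/a) * (-p)⁻¹ * ((a+k) ^ p - (a+(k+1)) ^ p)) := by
    intro k
    have hax : a ≤ a + (k:ℝ) := by
      have := Nat.cast_nonneg (α := ℝ) k; linarith
    have h := u_term_bounds hp ha hax
    have e1 : a + (k:ℝ) + 1 = a + 1 + k := by ring
    have e2 : a + ((k:ℝ) + 1) = a + (k:ℝ) + 1 := by ring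
    rw [e2, e1]
    rw [e1] at h
    exact h
  have hts := telescope_hasSum hp ha
  have hdsummable : Summable (fun k : ℕ => (a+k) ^ p - (a+(k+1)) ^ p) := hts.summable
  have htsum : (∑' k : ℕ, ((a+k) ^ p - (a+(k+1)) ^ p)) = a ^ p := hts.tsum_eq
  have hunn : ∀ k : ℕ, 0 ≤ (a+1+k) ^ p / (a+k) := by
    intro k
    have h1 : 0 < a + (k:ℝ) := by positivity
    have h2 : 0 < a + 1 + (k:ℝ) := by positivity
    positivity
  have husum : Summable (fun k : ℕ => (a+1+k) ^ p / (a+k)) :=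
    Summable.of_nonneg_of_le hunn (fun k => (key k).2) (hdsummable.mul_left _)
  refine ⟨husum, ?_, ?_⟩
  · have := Summable.tsum_le_tsum (fun k => (key k).1) (hdsummable.mul_left _) husum
    rwa [tsum_mul_left, htsum] at this
  · have := Summable.tsum_le_tsum (fun k => (key k).2) husum (hdsummable.mul_left _)
    rwa [tsum_mul_left, htsum] at this

lemma S_eq {θ : ℝ} (hθ : θ < 1) {i : ℕ} (hi : 1 ≤ i) :
    ∑' j : ℕ, pC i j * (j:ℝ≥0∞) ^ θ
      = ENNReal.ofReal ((i:ℝ) * ∑' k : ℕ, ((i:ℝ)+1+k) ^ (θ-1) / ((i:ℝ)+k)) := by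
  have hi0 : (0:ℝ) < i := by exact_mod_cast hi
  have hia : (1:ℝ) ≤ i := by exact_mod_cast hi
  have hp : θ - 1 < 0 := by linarith
  -- reindex
  have hinj : Function.Injective (fun k : ℕ => i + 1 + k) := add_right_injective (i+1)
  have hsupp : Function.support (fun j => pC i j * (j:ℝ≥0∞) ^ θ)
      ⊆ Set.range (fun k : ℕ => i + 1 + k) := by
    intro j hj
    by_contra hnot
    apply hj
    have hjlt : ¬ (i + 1 ≤ j) := by
      intro hle
      exact hnot ⟨j - (i+1), by show i+1+(j-(i+1)) = j; omega⟩
    show pC i j * (j:ℝ≥0∞) ^ θ = 0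
    rw [pC, if_neg hjlt, zero_mul]
  rw [← Function.Injective.tsum_eq hinj hsupp]
  have hterm : ∀ k : ℕ, pC i (i+1+k) * ((i+1+k : ℕ):ℝ≥0∞) ^ θ
      = ENNReal.ofReal ((i:ℝ) * (((i:ℝ)+1+k) ^ (θ-1) / ((i:ℝ)+k))) := by
    intro k
    have hb0 : (0:ℝ) < (i:ℝ)+1+k := by positivity
    have hc0 : (0:ℝ) < (i:ℝ)+k := by positivity
    have hcast1 : ((i+1+k : ℕ):ℝ≥0∞) = ENNReal.ofReal ((i:ℝ)+1+k) := by
      rw [← ENNReal.ofReal_natCast]; congr 1; push_cast; ring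
    have hcast2 : ((i+k : ℕ):ℝ≥0∞) = ENNReal.ofReal ((i:ℝ)+k) := by
      rw [← ENNReal.ofReal_natCast]; congr 1; push_cast; ring
    have hsub : ((i+1+k : ℕ):ℝ≥0∞) - 1 = ((i+k : ℕ):ℝ≥0∞) := by
      have : (i+1+k : ℕ) = (i+k) + 1 := by omega
      rw [this]
      push_cast
      exact ENNReal.add_sub_cancel_right ENNReal.one_ne_top
    rw [pC, if_pos (by omega)]
    rw [hsub, hcast1, hcast2, ← ENNReal.ofReal_natCast i]
    rw [ENNReal.ofReal_rpow_of_pos hb0]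
    rw [← ENNReal.ofReal_mul hb0.le]
    rw [← ENNReal.ofReal_div_of_pos (by positivity)]
    rw [← ENNReal.ofReal_mul (by positivity)]
    congr 1
    have hbθ : ((i:ℝ)+1+k) ^ θ = ((i:ℝ)+1+k) ^ (θ-1) * ((i:ℝ)+1+k) := by
      have h := Real.rpow_add_one hb0.ne' (θ-1)
      rw [sub_add_cancel] at h
      rw [h]
    rw [hbθ]
    field_simp
  simp_rw [hterm]
  have husum : Summable (fun k : ℕ => ((i:ℝ)+1+k) ^ (θ-1) / ((i:ℝ)+k)) :=
    (u_bounds hp hia).1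
  have hnn : ∀ k : ℕ, 0 ≤ (i:ℝ) * (((i:ℝ)+1+k) ^ (θ-1) / ((i:ℝ)+k)) := by
    intro k
    have hb0 : (0:ℝ) < (i:ℝ)+1+k := by positivity
    have hc0 : (0:ℝ) < (i:ℝ)+k := by positivity
    positivity
  rw [← ENNReal.ofReal_tsum_of_nonneg hnn (husum.mul_left _)]
  rw [tsum_mul_left]

lemma S_bounds {θ : ℝ} (hθ : θ < 1) {i : ℕ} (hi : 1 ≤ i) :
    ENNReal.ofReal ((1+1/(i:ℝ)) ^ (θ-2) * (1-θ)⁻¹ * (i:ℝ) ^ θ)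
        ≤ (∑' j : ℕ, pC i j * (j:ℝ≥0∞) ^ θ) ∧
    (∑' j : ℕ, pC i j * (j:ℝ≥0∞) ^ θ)
        ≤ ENNReal.ofReal ((1+1/(i:ℝ)) * (1-θ)⁻¹ * (i:ℝ) ^ θ) := by
  have hia : (1:ℝ) ≤ i := by exact_mod_cast hi
  have hi0 : (0:ℝ) < i := lt_of_lt_of_le one_pos hia
  have hp : θ - 1 < 0 := by linarith
  obtain ⟨husum, hlow, hhigh⟩ := u_bounds hp hia
  rw [S_eq hθ hi]
  simp only [show -(θ-1) = 1-θ by ring, show θ - 1 - 1 = θ - 2 by ring] at hlow hhigh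
  have haθ : (i:ℝ) * (i:ℝ) ^ (θ-1) = (i:ℝ) ^ θ := by
    have h := Real.rpow_add_one hi0.ne' (θ-1)
    rw [sub_add_cancel] at h
    rw [h]; ring
  constructor
  · apply ENNReal.ofReal_le_ofReal
    calc (1+1/(i:ℝ)) ^ (θ-2) * (1-θ)⁻¹ * (i:ℝ) ^ θ
        = (i:ℝ) * ((1+1/(i:ℝ)) ^ (θ-2) * (1-θ)⁻¹ * (i:ℝ) ^ (θ-1)) := by
          rw [← haθ]; ring
    _ ≤ (i:ℝ) * ∑' k : ℕ, ((i:ℝ)+1+k) ^ (θ-1) / ((i:ℝ)+k) :=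
          mul_le_mul_of_nonneg_left hlow hi0.le
  · apply ENNReal.ofReal_le_ofReal
    calc (i:ℝ) * ∑' k : ℕ, ((i:ℝ)+1+k) ^ (θ-1) / ((i:ℝ)+k)
        ≤ (i:ℝ) * ((1+1/(i:ℝ)) * (1-θ)⁻¹ * (i:ℝ) ^ (θ-1)) :=
          mul_le_mul_of_nonneg_left hhigh hi0.le
    _ = (1+1/(i:ℝ)) * (1-θ)⁻¹ * (i:ℝ) ^ θ := by rw [← haθ]; ring

lemma μC_zero_of_lt : ∀ n j, j < n + 1 → μC n j = 0 := by
  intro n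
  induction n with
  | zero => intro j hj; simp only [μC]; rw [if_neg (by omega)]
  | succ n ih =>
    intro j hj
    show (∑' i : ℕ, μC n i * pC i j) = 0
    rw [ENNReal.tsum_eq_zero]
    intro i
    by_cases hi : i < n + 1
    · rw [ih i hi, zero_mul]
    · have : ¬ (i + 1 ≤ j) := by omega
      rw [pC, if_neg this, mul_zero]

lemma M_succ (θ : ℝ) (n : ℕ) :
    (∑' j : ℕ, μC (n+1) j * (j:ℝ≥0∞) ^ θ)
      = ∑' i : ℕ, μC n i * ∑' j : ℕ, pC i j * (j:ℝ≥0∞) ^ θ := by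
  have h1 : ∀ j : ℕ, μC (n+1) j * (j:ℝ≥0∞) ^ θ
      = ∑' i : ℕ, μC n i * pC i j * (j:ℝ≥0∞) ^ θ := by
    intro j
    show (∑' i : ℕ, μC n i * pC i j) * (j:ℝ≥0∞) ^ θ = _
    rw [ENNReal.tsum_mul_right]
  simp_rw [h1]
  rw [ENNReal.tsum_comm]
  congr 1
  ext i
  simp_rw [mul_assoc]
  rw [ENNReal.tsum_mul_left]

lemma M_zero (θ : ℝ) : (∑' j : ℕ, μC 0 j * (j:ℝ≥0∞) ^ θ) = 1 := by
  rw [tsum_eq_single 1]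
  · show (if (1:ℕ) = 1 then (1:ℝ≥0∞) else 0) * ((1:ℕ):ℝ≥0∞) ^ θ = 1
    simp
  · intro b hb
    show (if b = 1 then (1:ℝ≥0∞) else 0) * (b:ℝ≥0∞) ^ θ = 0
    rw [if_neg hb, zero_mul]

lemma M_bounds {θ : ℝ} (hθ : θ < 1) (n : ℕ) :
    ENNReal.ofReal (((1-θ)⁻¹)^n * ((n:ℝ)+1) ^ (θ-2))
        ≤ (∑' j : ℕ, μC n j * (j:ℝ≥0∞) ^ θ) ∧
    (∑' j : ℕ, μC n j * (j:ℝ≥0∞) ^ θ)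
        ≤ ENNReal.ofReal (((1-θ)⁻¹)^n * ((n:ℝ)+1)) := by
  have hβ : (0:ℝ) < (1-θ)⁻¹ := by
    apply inv_pos.mpr; linarith
  induction n with
  | zero =>
    rw [M_zero]
    norm_num [Real.one_rpow]
  | succ n ih =>
    obtain ⟨ihlo, ihhi⟩ := ih
    have hn1 : (0:ℝ) < (n:ℝ)+1 := by positivity
    rw [M_succ]
    constructor
    · -- lower bound
      set c : ℝ := (1+1/((n:ℝ)+1)) ^ (θ-2) * (1-θ)⁻¹ with hc
      have hc0 : 0 < c := by
        apply mul_pos (Real.rpow_pos_of_pos (by positivity) _) hβ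
      have hterm : ∀ i : ℕ, ENNReal.ofReal c * (μC n i * (i:ℝ≥0∞) ^ θ)
          ≤ μC n i * ∑' j : ℕ, pC i j * (j:ℝ≥0∞) ^ θ := by
        intro i
        by_cases hμ : μC n i = 0
        · rw [hμ]; simp
        · have hin : n + 1 ≤ i := by
            by_contra h
            exact hμ (μC_zero_of_lt n i (by omega))
          have hi1 : 1 ≤ i := by omega
          have hi0 : (0:ℝ) < i := by exact_mod_cast Nat.lt_of_lt_of_le Nat.zero_lt_one hi1
          have hrpow : ((i:ℝ≥0∞)) ^ θ = ENNReal.ofReal ((i:ℝ) ^ θ) := by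
            rw [← ENNReal.ofReal_rpow_of_pos hi0, ENNReal.ofReal_natCast]
          have hmono : c ≤ (1+1/(i:ℝ)) ^ (θ-2) * (1-θ)⁻¹ := by
            apply mul_le_mul_of_nonneg_right _ hβ.le
            apply Real.rpow_le_rpow_of_nonpos (by positivity) _ (by linarith)
            have : (1:ℝ)/(i:ℝ) ≤ 1/((n:ℝ)+1) := by
              apply one_div_le_one_div_of_le hn1
              exact_mod_cast hin
            linarith
          calc ENNReal.ofReal c * (μC n i * (i:ℝ≥0∞) ^ θ)
              = μC n i * (ENNReal.ofReal c * ENNReal.ofReal ((i:ℝ) ^ θ)) := by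
                rw [hrpow]; ring
          _ = μC n i * ENNReal.ofReal (c * (i:ℝ) ^ θ) := by
                rw [ENNReal.ofReal_mul hc0.le]
          _ ≤ μC n i * ENNReal.ofReal ((1+1/(i:ℝ)) ^ (θ-2) * (1-θ)⁻¹ * (i:ℝ) ^ θ) := by
                apply mul_le_mul_right
                apply ENNReal.ofReal_le_ofReal
                apply mul_le_mul_of_nonneg_right hmono (Real.rpow_pos_of_pos hi0 _).le
          _ ≤ μC n i * ∑' j : ℕ, pC i j * (j:ℝ≥0∞) ^ θ :=
                mul_le_mul_right (S_bounds hθ hi1).1 _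
      have hsum := ENNReal.tsum_le_tsum hterm
      rw [ENNReal.tsum_mul_left] at hsum
      refine le_trans ?_ hsum
      have hA : ((1-θ)⁻¹)^(n+1) * (((n:ℝ)+1)+1) ^ (θ-2)
          = c * (((1-θ)⁻¹)^n * ((n:ℝ)+1) ^ (θ-2)) := by
        have hmul : (1+1/((n:ℝ)+1)) * ((n:ℝ)+1) = ((n:ℝ)+1)+1 := by field_simp
        have : (1+1/((n:ℝ)+1)) ^ (θ-2) * ((n:ℝ)+1) ^ (θ-2) = (((n:ℝ)+1)+1) ^ (θ-2) := by
          rw [← Real.mul_rpow (by positivity) (by positivity), hmul]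
        rw [hc]
        calc ((1-θ)⁻¹)^(n+1) * (((n:ℝ)+1)+1) ^ (θ-2)
            = ((1-θ)⁻¹)^(n+1) * ((1+1/((n:ℝ)+1)) ^ (θ-2) * ((n:ℝ)+1) ^ (θ-2)) := by rw [this]
        _ = (1+1/((n:ℝ)+1)) ^ (θ-2) * (1-θ)⁻¹ * (((1-θ)⁻¹)^n * ((n:ℝ)+1) ^ (θ-2)) := by ring
      rw [show ((n+1:ℕ):ℝ) = (n:ℝ)+1 by push_cast; ring, hA, ENNReal.ofReal_mul hc0.le]
      exact mul_le_mul_right ihlo _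
    · -- upper bound
      set c : ℝ := (1+1/((n:ℝ)+1)) * (1-θ)⁻¹ with hc
      have hc0 : 0 < c := by
        apply mul_pos (by positivity) hβ
      have hterm : ∀ i : ℕ, μC n i * (∑' j : ℕ, pC i j * (j:ℝ≥0∞) ^ θ)
          ≤ ENNReal.ofReal c * (μC n i * (i:ℝ≥0∞) ^ θ) := by
        intro i
        by_cases hμ : μC n i = 0
        · rw [hμ]; simp
        · have hin : n + 1 ≤ i := by
            by_contra h
            exact hμ (μC_zero_of_lt n i (by omega))
          have hi1 : 1 ≤ i := by omega
          have hi0 : (0:ℝ) < i := by exact_mod_cast Nat.lt_of_lt_of_le Nat.zero_lt_one hi1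
          have hrpow : ((i:ℝ≥0∞)) ^ θ = ENNReal.ofReal ((i:ℝ) ^ θ) := by
            rw [← ENNReal.ofReal_rpow_of_pos hi0, ENNReal.ofReal_natCast]
          have hmono : (1+1/(i:ℝ)) * (1-θ)⁻¹ ≤ c := by
            apply mul_le_mul_of_nonneg_right _ hβ.le
            have : (1:ℝ)/(i:ℝ) ≤ 1/((n:ℝ)+1) := by
              apply one_div_le_one_div_of_le hn1
              exact_mod_cast hin
            linarith
          calc μC n i * (∑' j : ℕ, pC i j * (j:ℝ≥0∞) ^ θ)
              ≤ μC n i * ENNReal.ofReal ((1+1/(i:ℝ)) * (1-θ)⁻¹ * (i:ℝ) ^ θ) :=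
                mul_le_mul_right (S_bounds hθ hi1).2 _
          _ ≤ μC n i * ENNReal.ofReal (c * (i:ℝ) ^ θ) := by
                apply mul_le_mul_right
                apply ENNReal.ofReal_le_ofReal
                apply mul_le_mul_of_nonneg_right hmono (Real.rpow_pos_of_pos hi0 _).le
          _ = ENNReal.ofReal c * (μC n i * (i:ℝ≥0∞) ^ θ) := by
                rw [hrpow, ENNReal.ofReal_mul hc0.le]; ring
      have hsum := ENNReal.tsum_le_tsum hterm
      rw [ENNReal.tsum_mul_left] at hsum
      refine le_trans hsum ?_
      have hB : c * (((1-θ)⁻¹)^n * ((n:ℝ)+1)) = ((1-θ)⁻¹)^(n+1) * (((n:ℝ)+1)+1) := by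
        have hmul : (1+1/((n:ℝ)+1)) * ((n:ℝ)+1) = ((n:ℝ)+1)+1 := by field_simp
        rw [hc]
        calc (1+1/((n:ℝ)+1)) * (1-θ)⁻¹ * (((1-θ)⁻¹)^n * ((n:ℝ)+1))
            = ((1-θ)⁻¹)^(n+1) * ((1+1/((n:ℝ)+1)) * ((n:ℝ)+1)) := by ring
        _ = ((1-θ)⁻¹)^(n+1) * (((n:ℝ)+1)+1) := by rw [hmul]
      rw [show ((n+1:ℕ):ℝ) = (n:ℝ)+1 by push_cast; ring, ← hB, ENNReal.ofReal_mul hc0.le]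
      exact mul_le_mul_right ihhi _

/-- For `θ < 1`, `(1/n) log E(C_n^θ) → log(1/(1-θ))` as `n → ∞`. -/
theorem C_process_moment_growth (θ : ℝ) (hθ : θ < 1) :
    Tendsto (fun n : ℕ =>
        (1 / (n : ℝ)) * Real.log (∑' j : ℕ, μC n j * (j : ℝ≥0∞) ^ θ).toReal)
      atTop (nhds (Real.log (1 / (1 - θ)))) := by
  have hβ : (0:ℝ) < (1-θ)⁻¹ := inv_pos.mpr (by linarith)
  set β : ℝ := (1-θ)⁻¹ with hβdef
  have hlogβ : Real.log (1 / (1-θ)) = Real.log β := by rw [one_div]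
  rw [hlogβ]
  -- real bounds on toReal of moments
  have hA : ∀ n : ℕ, (0:ℝ) < β^n * ((n:ℝ)+1) ^ (θ-2) := by
    intro n
    exact mul_pos (pow_pos hβ n) (Real.rpow_pos_of_pos (by positivity) _)
  have hB : ∀ n : ℕ, (0:ℝ) < β^n * ((n:ℝ)+1) := by
    intro n; positivity
  have hMbound : ∀ n : ℕ,
      β^n * ((n:ℝ)+1) ^ (θ-2) ≤ (∑' j : ℕ, μC n j * (j:ℝ≥0∞) ^ θ).toReal ∧
      (∑' j : ℕ, μC n j * (j:ℝ≥0∞) ^ θ).toReal ≤ β^n * ((n:ℝ)+1) := by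
    intro n
    obtain ⟨hlo, hhi⟩ := M_bounds hθ n
    have hMtop : (∑' j : ℕ, μC n j * (j:ℝ≥0∞) ^ θ) ≠ ⊤ :=
      ne_top_of_le_ne_top ENNReal.ofReal_ne_top hhi
    constructor
    · have := ENNReal.toReal_mono hMtop hlo
      rwa [ENNReal.toReal_ofReal (hA n).le] at this
    · have := ENNReal.toReal_mono ENNReal.ofReal_ne_top hhi
      rwa [ENNReal.toReal_ofReal (hB n).le] at this
  -- log bounds
  have hlog : ∀ n : ℕ, 1 ≤ n →
      Real.log β + (θ-2) * (Real.log ((n:ℝ)+1) / n)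
        ≤ (1 / (n:ℝ)) * Real.log (∑' j : ℕ, μC n j * (j:ℝ≥0∞) ^ θ).toReal ∧
      (1 / (n:ℝ)) * Real.log (∑' j : ℕ, μC n j * (j:ℝ≥0∞) ^ θ).toReal
        ≤ Real.log β + Real.log ((n:ℝ)+1) / n := by
    intro n hn
    have hn0 : (0:ℝ) < n := by exact_mod_cast hn
    obtain ⟨hlo, hhi⟩ := hMbound n
    have hlogA : Real.log (β^n * ((n:ℝ)+1) ^ (θ-2))
        = n * Real.log β + (θ-2) * Real.log ((n:ℝ)+1) := by
      rw [Real.log_mul (by positivity) (Real.rpow_pos_of_pos (by positivity) _).ne',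
        Real.log_pow, Real.log_rpow (by positivity)]
    have hlogB : Real.log (β^n * ((n:ℝ)+1))
        = n * Real.log β + Real.log ((n:ℝ)+1) := by
      rw [Real.log_mul (by positivity) (by positivity), Real.log_pow]
    have h1 : Real.log (β^n * ((n:ℝ)+1) ^ (θ-2))
        ≤ Real.log (∑' j : ℕ, μC n j * (j:ℝ≥0∞) ^ θ).toReal :=
      Real.log_le_log (hA n) hlo
    have h2 : Real.log (∑' j : ℕ, μC n j * (j:ℝ≥0∞) ^ θ).toReal
        ≤ Real.log (β^n * ((n:ℝ)+1)) :=
      Real.log_le_log (lt_of_lt_of_le (hA n) hlo) hhi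
    rw [hlogA] at h1
    rw [hlogB] at h2
    constructor
    · have := mul_le_mul_of_nonneg_left h1 (le_of_lt (one_div_pos.mpr hn0))
      calc Real.log β + (θ-2) * (Real.log ((n:ℝ)+1) / n)
          = 1/(n:ℝ) * ((n:ℝ) * Real.log β + (θ-2) * Real.log ((n:ℝ)+1)) := by
            field_simp
      _ ≤ _ := this
    · have := mul_le_mul_of_nonneg_left h2 (le_of_lt (one_div_pos.mpr hn0))
      calc (1/(n:ℝ)) * Real.log (∑' j : ℕ, μC n j * (j:ℝ≥0∞) ^ θ).toReal
          ≤ 1/(n:ℝ) * ((n:ℝ) * Real.log β + Real.log ((n:ℝ)+1)) := this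
      _ = Real.log β + Real.log ((n:ℝ)+1) / n := by field_simp
  -- the error term tends to 0
  have hee : Tendsto (fun n : ℕ => Real.log ((n:ℝ)+1) / n) atTop (nhds 0) := by
    have h1 : Tendsto (fun x : ℝ => Real.log x / x) atTop (nhds 0) :=
      Real.isLittleO_log_id_atTop.tendsto_div_nhds_zero
    have h2 : Tendsto (fun n : ℕ => (n:ℝ)+1) atTop atTop :=
      tendsto_atTop_add_const_right _ 1 tendsto_natCast_atTop_atTop
    have h3 : Tendsto (fun n : ℕ => Real.log ((n:ℝ)+1) / ((n:ℝ)+1)) atTop (nhds 0) :=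
      h1.comp h2
    have h4 : Tendsto (fun n : ℕ => ((n:ℝ)+1)/(n:ℝ)) atTop (nhds 1) := by
      have : Tendsto (fun n : ℕ => 1 + 1/(n:ℝ)) atTop (nhds (1+0)) :=
        tendsto_const_nhds.add (tendsto_one_div_atTop_nhds_zero_nat)
      rw [add_zero] at this
      apply this.congr'
      filter_upwards [eventually_ge_atTop 1] with n hn
      have hn0 : (0:ℝ) < n := by exact_mod_cast hn
      field_simp
    have h5 := h3.mul h4
    rw [zero_mul] at h5
    · apply h5.congr'
      filter_upwards [eventually_ge_atTop 1] with n hn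
      have hn0 : (0:ℝ) < n := by exact_mod_cast hn
      field_simp
  -- squeeze
  have hlowlim : Tendsto (fun n : ℕ => Real.log β + (θ-2) * (Real.log ((n:ℝ)+1) / n))
      atTop (nhds (Real.log β)) := by
    have := (tendsto_const_nhds :
        Tendsto (fun _ : ℕ => Real.log β) atTop (nhds (Real.log β))).add
      (hee.const_mul (θ-2))
    simpa using this
  have hhighlim : Tendsto (fun n : ℕ => Real.log β + Real.log ((n:ℝ)+1) / n)
      atTop (nhds (Real.log β)) := by
    have := (tendsto_const_nhds :
        Tendsto (fun _ : ℕ => Real.log β) atTop (nhds (Real.log β))).add hee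
    simpa using this
  apply tendsto_of_tendsto_of_tendsto_of_le_of_le' hlowlim hhighlim
  · filter_upwards [eventually_ge_atTop 1] with n hn
    exact (hlog n hn).1
  · filter_upwards [eventually_ge_atTop 1] with n hn
    exact (hlog n hn).2
end
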